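/- For a tree T with maximum degree Δ(T) ≥ 1, the strong chromatic index of T equals θ(T) - 1, where θ(T) is the maximum Ore-degree. -/

import Mathlib

open SimpleGraph
open scoped Classical

/-- Two edges (as unordered pairs of vertices) are adjacent:
they are distinct and share an endpoint. -/
def EdgeAdj {V : Type*} (e₁ e₂ : Sym2 V) : Prop :=
  e₁ ≠ e₂ ∧ ∃ v, v ∈ e₁ ∧ v ∈ e₂

/-- `φ` is a star edge coloring of `G`: a proper edge coloring such that
no path of length four and no cycle of length four is bichromatic. -/
def IsStarEdgeColoring {V : Type*} (G : SimpleGraph V) (φ : Sym2 V → ℕ) : Prop :=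
  (∀ e₁ ∈ G.edgeSet, ∀ e₂ ∈ G.edgeSet, EdgeAdj e₁ e₂ → φ e₁ ≠ φ e₂) ∧
  (∀ (u v : V) (p : G.Walk u v), p.IsPath → p.length = 4 →
      ¬ ∃ c₁ c₂ : ℕ, ∀ e ∈ p.edges, φ e = c₁ ∨ φ e = c₂) ∧
  (∀ (u : V) (p : G.Walk u u), p.IsCycle → p.length = 4 →
      ¬ ∃ c₁ c₂ : ℕ, ∀ e ∈ p.edges, φ e = c₁ ∨ φ e = c₂)

/-- `G` has a star edge coloring using colors `< k`. -/
def StarColorable {V : Type*} (G : SimpleGraph V) (k : ℕ) : Prop :=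
  ∃ φ : Sym2 V → ℕ, (∀ e ∈ G.edgeSet, φ e < k) ∧ IsStarEdgeColoring G φ

/-- The star chromatic index of `G`. -/
noncomputable def starChromaticIndex {V : Type*} (G : SimpleGraph V) : ℕ :=
  sInf {k | StarColorable G k}

/-- `G` is star `k`-edge choosable. -/
def StarChoosable {V : Type*} (G : SimpleGraph V) (k : ℕ) : Prop :=
  ∀ L : Sym2 V → Finset ℕ, (∀ e ∈ G.edgeSet, k ≤ (L e).card) →
    ∃ φ : Sym2 V → ℕ, (∀ e ∈ G.edgeSet, φ e ∈ L e) ∧ IsStarEdgeColoring G φ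

/-- The list star chromatic index of `G`. -/
noncomputable def listStarChromaticIndex {V : Type*} (G : SimpleGraph V) : ℕ :=
  sInf {k | StarChoosable G k}

/-- The maximum Ore-degree `θ(G) = max_{xy ∈ E(G)} (d(x) + d(y))`. -/
noncomputable def oreDegree {V : Type*} (G : SimpleGraph V) [Fintype V] : ℕ :=
  sSup {n | ∃ x y, G.Adj x y ∧ n = G.degree x + G.degree y}

/-- `H = T ∪ C` is a generalized Halin graph with characteristic tree `T` and
adjoint cycle `C`: `T` is a tree with `Δ(T) ≥ 3`, `C` is a cycle (a connected
`2`-regular subgraph on its support) passing exactly through the leaves of `T`,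
the edges of `T` and `C` are disjoint, and `H` is their union. -/
def IsGenHalin {V : Type*} [Fintype V] (H T C : SimpleGraph V) : Prop :=
  T.IsTree ∧ 3 ≤ T.maxDegree ∧ H = T ⊔ C ∧ Disjoint T.edgeSet C.edgeSet ∧
  (∀ v, T.degree v = 1 ↔ C.degree v = 2) ∧
  (∀ v, C.degree v = 0 ∨ C.degree v = 2) ∧
  (∀ u v, C.degree u = 2 → C.degree v = 2 → C.Reachable u v)

/-- A Halin graph: a generalized Halin graph whose characteristic tree has
no vertex of degree `2`. -/
def IsHalin {V : Type*} [Fintype V] (H T C : SimpleGraph V) : Prop :=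
  IsGenHalin H T C ∧ ∀ v, T.degree v ≠ 2

/-- A complete Halin graph: all leaves of `T` are at the same distance
from the root. -/
def IsCompleteHalin {V : Type*} [Fintype V] (H T C : SimpleGraph V) : Prop :=
  IsHalin H T C ∧
    ∃ r, ∀ u v, T.degree u = 1 → T.degree v = 1 → T.dist r u = T.dist r v

/-- `φ` is a strong edge coloring of `G`: edges at distance at most two
(adjacent edges, or edges joined by an edge) get distinct colors. -/
def IsStrongEdgeColoring {V : Type*} (G : SimpleGraph V) (φ : Sym2 V → ℕ) : Prop :=
  ∀ e₁ ∈ G.edgeSet, ∀ e₂ ∈ G.edgeSet, e₁ ≠ e₂ →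
    ((∃ v, v ∈ e₁ ∧ v ∈ e₂) ∨ (∃ u v, u ∈ e₁ ∧ v ∈ e₂ ∧ G.Adj u v)) →
    φ e₁ ≠ φ e₂

/-- The strong chromatic index of `G`. -/
noncomputable def strongChromaticIndex {V : Type*} (G : SimpleGraph V) : ℕ :=
  sInf {k | ∃ φ : Sym2 V → ℕ, (∀ e ∈ G.edgeSet, φ e < k) ∧ IsStrongEdgeColoring G φ}

/-!
For an edge `xy`, the `d(x) + d(y) - 1` edges at `x` or `y` pairwise conflict, which gives the
lower bound. For the upper bound, root the tree at `r` and color its edges greedily by increasing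
depth. When the edge from `u` to its child `v` is colored, the already colored edges in conflict
with it all pass through `u` or through the parent `y` of `u`, so there are at most
`d(u) + d(y) - 2 ≤ θ - 2` of them and `θ - 1` colors suffice.
-/

open Finset

theorem Finset.exists_coloring_of_card_filter_lt {α β : Type*} [DecidableEq α] [LinearOrder β]
    {R : α → α → Prop} (hR : ∀ ⦃a b⦄, R a b → R b a) (f : α → β) (k : ℕ) (s : Finset α)
    (h : ∀ a ∈ s, #{x ∈ s | x ≠ a ∧ R a x ∧ f x ≤ f a} < k) :
    ∃ c : α → ℕ, (∀ a ∈ s, c a < k) ∧ ∀ a ∈ s, ∀ b ∈ s, a ≠ b → R a b → c a ≠ c b := by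
  induction s using Finset.induction_on_max_value f with
  | empty => exact ⟨fun _ => 0, by simp, by simp⟩
  | insert a s ha hmax ih =>
    obtain ⟨c, hck, hc⟩ := ih fun x hx => (card_le_card (filter_subset_filter _
      (subset_insert a s))).trans_lt (h x (mem_insert_of_mem hx))
    have hnbrs : #({x ∈ s | R a x}.image c) < #(range k) := by
      rw [card_range]
      refine card_image_le.trans_lt
        ((card_le_card fun x hx => ?_).trans_lt (h a (mem_insert_self a s)))
      obtain ⟨hxs, hRx⟩ := mem_filter.mp hx
      exact mem_filter.mpr ⟨mem_insert_of_mem hxs, ne_of_mem_of_not_mem hxs ha, hRx, hmax x hxs⟩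
    obtain ⟨m, hmk, hm⟩ := exists_mem_notMem_of_card_lt_card hnbrs
    have hfresh : ∀ x ∈ s, R a x → m ≠ c x := fun x hx hRx hmx =>
      hm (mem_image.mpr ⟨x, mem_filter.mpr ⟨hx, hRx⟩, hmx.symm⟩)
    refine ⟨Function.update c a m, ?_, ?_⟩
    · intro x hx
      rcases eq_or_ne x a with rfl | hxa
      · simpa using hmk
      · simpa [hxa] using hck x ((mem_insert.mp hx).resolve_left hxa)
    · intro x hx y hy hxy hRxy
      have hys : y ≠ a → y ∈ s := fun hya => (mem_insert.mp hy).resolve_left hya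
      have hxs : x ≠ a → x ∈ s := fun hxa => (mem_insert.mp hx).resolve_left hxa
      rcases eq_or_ne x a with rfl | hxa
      · simpa [hxy.symm] using hfresh y (hys hxy.symm) hRxy
      rcases eq_or_ne y a with rfl | hya
      · simpa [hxa] using (hfresh x (hxs hxa) (hR hRxy)).symm
      simpa [hxa, hya] using hc x (hxs hxa) y (hys hya) hxy hRxy

namespace SimpleGraph

variable {V : Type*} {G : SimpleGraph V}

def EdgeConflict (G : SimpleGraph V) (e₁ e₂ : Sym2 V) : Prop :=
  (∃ v, v ∈ e₁ ∧ v ∈ e₂) ∨ (∃ u v, u ∈ e₁ ∧ v ∈ e₂ ∧ G.Adj u v)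

lemma EdgeConflict.symm {e₁ e₂ : Sym2 V} : G.EdgeConflict e₁ e₂ → G.EdgeConflict e₂ e₁
  | .inl ⟨v, h₁, h₂⟩ => .inl ⟨v, h₂, h₁⟩
  | .inr ⟨u, v, hu, hv, huv⟩ => .inr ⟨v, u, hv, hu, huv.symm⟩

lemma edgeConflict_of_adj {x y : V} (hxy : G.Adj x y) {e₁ e₂ : Sym2 V}
    (h₁ : x ∈ e₁ ∨ y ∈ e₁) (h₂ : x ∈ e₂ ∨ y ∈ e₂) : G.EdgeConflict e₁ e₂ := by
  rcases h₁ with h₁ | h₁ <;> rcases h₂ with h₂ | h₂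
  · exact .inl ⟨x, h₁, h₂⟩
  · exact .inr ⟨x, y, h₁, h₂, hxy⟩
  · exact .inr ⟨y, x, h₁, h₂, hxy.symm⟩
  · exact .inl ⟨y, h₁, h₂⟩

section Finite

variable [Fintype V]

lemma degree_add_degree_le_oreDegree {x y : V} (h : G.Adj x y) :
    G.degree x + G.degree y ≤ oreDegree G := by
  refine le_csSup ⟨2 * Fintype.card V, ?_⟩ ⟨x, y, h, rfl⟩
  rintro _ ⟨a, b, -, rfl⟩
  have := G.degree_lt_card_verts a
  have := G.degree_lt_card_verts b
  omega

lemma oreDegree_le {n : ℕ} (h : ∀ x y, G.Adj x y → G.degree x + G.degree y ≤ n) :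
    oreDegree G ≤ n :=
  csSup_le' fun _ ⟨x, y, hxy, hn⟩ => hn ▸ h x y hxy

lemma card_incidenceFinset_union_add_one {x y : V} (h : G.Adj x y) :
    #(G.incidenceFinset x ∪ G.incidenceFinset y) + 1 = G.degree x + G.degree y := by
  have hinter : G.incidenceFinset x ∩ G.incidenceFinset y = {s(x, y)} := by
    apply coe_injective
    push_cast [coe_incidenceFinset]
    exact G.incidenceSet_inter_incidenceSet_of_adj h
  rw [← card_incidenceFinset_eq_degree, ← card_incidenceFinset_eq_degree,
    ← card_union_add_card_inter, hinter, card_singleton]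

end Finite

end SimpleGraph

open SimpleGraph

lemma IsStrongEdgeColoring.degree_add_degree_le {V : Type*} [Fintype V] {G : SimpleGraph V}
    {φ : Sym2 V → ℕ} {k : ℕ} (hφ : IsStrongEdgeColoring G φ) (hk : ∀ e ∈ G.edgeSet, φ e < k)
    {x y : V} (hxy : G.Adj x y) : G.degree x + G.degree y ≤ k + 1 := by
  have hsum := card_incidenceFinset_union_add_one hxy
  set S := G.incidenceFinset x ∪ G.incidenceFinset y
  have hS : ∀ e ∈ S, e ∈ G.edgeSet ∧ (x ∈ e ∨ y ∈ e) := by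
    intro e he
    rcases mem_union.mp he with h | h <;> rw [mem_incidenceFinset] at h
    exacts [⟨h.1, .inl h.2⟩, ⟨h.1, .inr h.2⟩]
  have hcard : #S ≤ #(range k) := by
    refine card_le_card_of_injOn φ (fun e he => mem_range.mpr (hk e (hS e he).1)) ?_
    intro e₁ h₁ e₂ h₂ hφe
    by_contra hne
    exact hφ e₁ (hS e₁ h₁).1 e₂ (hS e₂ h₂).1 hne
      (edgeConflict_of_adj hxy (hS e₁ h₁).2 (hS e₂ h₂).2) hφe
  rw [card_range] at hcard
  omega

lemma IsStrongEdgeColoring.oreDegree_sub_one_le {V : Type*} [Fintype V] {G : SimpleGraph V}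
    {φ : Sym2 V → ℕ} {k : ℕ} (hφ : IsStrongEdgeColoring G φ) (hk : ∀ e ∈ G.edgeSet, φ e < k) :
    oreDegree G - 1 ≤ k := by
  have := oreDegree_le fun x y hxy => hφ.degree_add_degree_le hk hxy
  omega

namespace SimpleGraph

variable {V : Type*} {G : SimpleGraph V}

noncomputable def edgeDepth (G : SimpleGraph V) (r : V) : Sym2 V → ℕ :=
  Sym2.lift ⟨fun a b => max (G.dist r a) (G.dist r b), fun _ _ => max_comm _ _⟩

namespace IsTree

lemma eq_of_adj_of_dist_le (hT : G.IsTree) (r : V) {a a' v : V} (ha : G.Adj a v)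
    (ha' : G.Adj a' v)
    (hd : G.dist r a + 1 = G.dist r v) (hd' : G.dist r a' ≤ G.dist r v) : a' = a := by
  have hd'' : G.dist r a' + 1 = G.dist r v := by
    have := hT.dist_eq_dist_add_one_of_adj r ha'
    omega
  obtain ⟨p, hp, hpl⟩ := (hT.connected r v).exists_path_of_dist
  suffices ∀ b, G.Adj b v → G.dist r b + 1 = G.dist r v → b = p.penultimate from
    (this a' ha' hd'').trans (this a ha hd).symm
  intro b hb hbd
  by_contra hne
  have hbp : b ∉ p.support := fun h => hne (hT.isAcyclic.eq_penultimate_of_adj_end hp hb.symm h)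
  obtain ⟨q, hq, hql⟩ := (hT.connected r b).exists_path_of_dist
  have hvq : v ∈ q.support :=
    hT.isAcyclic.mem_support_of_ne_mem_support_of_adj_of_isPath hq hp hb hbp
  have := congrArg Walk.length (hT.isAcyclic.path_concat hp hq hb.symm hvq)
  rw [Walk.length_concat] at this
  omega

lemma mem_of_adj_of_dist_le (hT : G.IsTree) (r : V) {a b c p : V} (hab : G.Adj a b)
    (hc : c ∈ s(a, b)) (ha : G.dist r a ≤ G.dist r c) (hb : G.dist r b ≤ G.dist r c)
    (hp : G.Adj p c) (hpc : G.dist r p + 1 = G.dist r c) : p ∈ s(a, b) := by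
  rcases Sym2.mem_iff.mp hc with rfl | rfl
  · rw [hT.eq_of_adj_of_dist_le r hp hab.symm hpc hb]
    exact Sym2.mem_mk_right _ _
  · rw [hT.eq_of_adj_of_dist_le r hp hab hpc ha]
    exact Sym2.mem_mk_left _ _

lemma mem_or_mem_of_edgeConflict (hT : G.IsTree) (r : V) {u v y a b : V}
    (hd : G.dist r u + 1 = G.dist r v)
    (hy : ∀ y', G.Adj y' u → G.dist r y' + 1 = G.dist r u → y' = y) (hab : G.Adj a b)
    (ha : G.dist r a ≤ G.dist r v) (hb : G.dist r b ≤ G.dist r v) (huv : G.Adj u v)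
    (hc : G.EdgeConflict s(u, v) s(a, b)) : u ∈ s(a, b) ∨ y ∈ s(a, b) := by
  have hle : ∀ z ∈ s(a, b), G.dist r z ≤ G.dist r v := by
    intro z hz
    rcases Sym2.mem_iff.mp hz with rfl | rfl <;> assumption
  rcases hc with ⟨z, hzuv, hz⟩ | ⟨x, z, hx, hz, hxz⟩
  · rcases Sym2.mem_iff.mp hzuv with rfl | rfl
    · exact .inl hz
    · exact .inl (hT.mem_of_adj_of_dist_le r hab hz ha hb huv hd)
  rcases Sym2.mem_iff.mp hx with rfl | rfl
  · rcases hT.dist_eq_dist_add_one_of_adj r hxz with h | h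
    · exact .inr (hy z hxz.symm h.symm ▸ hz)
    · exact .inl (hT.mem_of_adj_of_dist_le r hab hz (by omega) (by omega) hxz h.symm)
  · rw [hT.eq_of_adj_of_dist_le r huv hxz.symm hd (hle z hz)] at hz
    exact .inl hz

/-- `y` is the parent of `u`, or `v` if `u` is the root. -/
lemma exists_adj_forall_parent_eq (hT : G.IsTree) (r : V) {u v : V} (huv : G.Adj u v) :
    ∃ y, G.Adj u y ∧ ∀ y', G.Adj y' u → G.dist r y' + 1 = G.dist r u → y' = y := by
  by_cases h : ∃ y, G.Adj y u ∧ G.dist r y + 1 = G.dist r u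
  · obtain ⟨y, hyu, hyd⟩ := h
    exact ⟨y, hyu.symm, fun y' hy'u hy'd => hT.eq_of_adj_of_dist_le r hyu hy'u hyd (by omega)⟩
  · push Not at h
    exact ⟨v, huv, fun y' hy'u hy'd => absurd hy'd (h y' hy'u)⟩

variable [Fintype V]

lemma card_filter_edgeConflict_lt (hT : G.IsTree) (r : V) {u v : V} (huv : G.Adj u v)
    (hd : G.dist r u + 1 = G.dist r v) :
    #{e ∈ G.edgeFinset | e ≠ s(u, v) ∧ G.EdgeConflict s(u, v) e ∧
      G.edgeDepth r e ≤ G.edgeDepth r s(u, v)} < oreDegree G - 1 := by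
  obtain ⟨y, huy, hy⟩ := hT.exists_adj_forall_parent_eq r huv
  have hsub : {e ∈ G.edgeFinset | e ≠ s(u, v) ∧ G.EdgeConflict s(u, v) e ∧
      G.edgeDepth r e ≤ G.edgeDepth r s(u, v)} ⊆
      (G.incidenceFinset u ∪ G.incidenceFinset y).erase s(u, v) := by
    intro e he
    rw [mem_filter, mem_edgeFinset] at he
    rw [mem_erase, mem_union, mem_incidenceFinset, mem_incidenceFinset]
    obtain ⟨hab, hne, hc, hdepth⟩ := he
    induction e using Sym2.ind with | _ a b
    simp only [mem_edgeSet, edgeDepth, Sym2.lift_mk] at hab hdepth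
    simp only [incidenceSet, Set.mem_ofPred_eq, mem_edgeSet]
    have := hT.mem_or_mem_of_edgeConflict r hd hy hab (by omega) (by omega) huv hc
    tauto
  have hmem : s(u, v) ∈ G.incidenceFinset u ∪ G.incidenceFinset y :=
    mem_union_left _ ((mem_incidenceFinset _ _ _).mpr ⟨huv, Sym2.mem_mk_left _ _⟩)
  have := card_le_card hsub
  rw [card_erase_of_mem hmem] at this
  have := card_incidenceFinset_union_add_one huy
  have := degree_add_degree_le_oreDegree huy
  have := card_pos.mpr ⟨_, hmem⟩
  omega

theorem exists_isStrongEdgeColoring (hT : G.IsTree) :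
    ∃ φ : Sym2 V → ℕ, (∀ e ∈ G.edgeSet, φ e < oreDegree G - 1) ∧ IsStrongEdgeColoring G φ := by
  obtain ⟨r⟩ := hT.connected.nonempty
  have hcard : ∀ e ∈ G.edgeFinset, #{e' ∈ G.edgeFinset | e' ≠ e ∧ G.EdgeConflict e e' ∧
      G.edgeDepth r e' ≤ G.edgeDepth r e} < oreDegree G - 1 := by
    intro e he
    rw [mem_edgeFinset] at he
    induction e using Sym2.ind with | _ a b
    rcases hT.dist_eq_dist_add_one_of_adj r he with h | h
    · rw [Sym2.eq_swap]
      exact hT.card_filter_edgeConflict_lt r he.symm h.symm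
    · exact hT.card_filter_edgeConflict_lt r he h.symm
  obtain ⟨φ, hφk, hφ⟩ := G.edgeFinset.exists_coloring_of_card_filter_lt (R := G.EdgeConflict)
    (fun _ _ => EdgeConflict.symm) (G.edgeDepth r) (oreDegree G - 1) hcard
  exact ⟨φ, fun e he => hφk e (mem_edgeFinset.mpr he),
    fun e₁ h₁ e₂ h₂ => hφ e₁ (mem_edgeFinset.mpr h₁) e₂ (mem_edgeFinset.mpr h₂)⟩

end IsTree

end SimpleGraph

theorem stmt_19_general {V : Type*} [Fintype V] (T : SimpleGraph V) (hT : T.IsTree) :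
    strongChromaticIndex T = oreDegree T - 1 := by
  obtain ⟨φ, hφk, hφ⟩ := hT.exists_isStrongEdgeColoring
  exact le_antisymm (Nat.sInf_le ⟨φ, hφk, hφ⟩)
    (le_csInf ⟨_, φ, hφk, hφ⟩ fun _ ⟨ψ, hψk, hψ⟩ => hψ.oreDegree_sub_one_le hψk)

theorem stmt_19 {V : Type*} [Fintype V] (T : SimpleGraph V) (hT : T.IsTree)
    (hΔ : 1 ≤ T.maxDegree) :
    strongChromaticIndex T = oreDegree T - 1 :=
  stmt_19_general T hT
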